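/- arXiv:2003.11062 — 4 statements merged into one kernel-verified Lean document; each statement's English description precedes it below -/
import Mathlib

section
/- Let (Ω, F, P) be a probability space, G a sub-σ-algebra of F, R : Ω → ℕ a G-measurable random variable, V : Ω → ℝ a nonnegative integrable random variable, and α ∈ (0,1). If the conditional expectation satisfies E[V | G] ≤ α·R almost surely, then E[ V / max{R, 1} ] ≤ α. -/
open MeasureTheory

/-! The weight `1 / max(R, 1)` is `G`-measurable and bounded, so it can be pulled through the
conditional expectation:
`E[V / max(R, 1)] = E[E[V | G] / max(R, 1)] ≤ E[α R / max(R, 1)] ≤ α`. -/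

theorem integral_mul_condExp_of_stronglyMeasurable {Ω : Type*} {m m₀ : MeasurableSpace Ω}
    {μ : Measure Ω} (hm : m ≤ m₀) [SigmaFinite (μ.trim hm)] {c f : Ω → ℝ} {C : ℝ}
    (hc : StronglyMeasurable[m] c) (hcC : ∀ ω, ‖c ω‖ ≤ C) (hf : Integrable f μ) :
    ∫ ω, c ω * μ[f | m] ω ∂μ = ∫ ω, c ω * f ω ∂μ := by
  have hcf : Integrable (c * f) μ :=
    hf.bdd_mul (hc.mono hm).aestronglyMeasurable (ae_of_all _ hcC)
  calc ∫ ω, (c * μ[f | m]) ω ∂μ = ∫ ω, μ[c * f | m] ω ∂μ :=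
        integral_congr_ae (condExp_mul_of_stronglyMeasurable_left hc hcf hf).symm
    _ = ∫ ω, (c * f) ω ∂μ := integral_condExp hm

theorem inv_max_one_mul_le {a r α : ℝ} (hα : 0 ≤ α) (h : a ≤ α * r) :
    (max r 1)⁻¹ * a ≤ α := by
  rw [inv_mul_le_iff₀ (lt_max_of_lt_right one_pos)]
  exact h.trans (mul_le_mul_of_nonneg_left (le_max_left r 1) hα) |>.trans_eq (mul_comm _ _)

theorem fdr_core_bound_general {Ω : Type*} {F : MeasurableSpace Ω} {μ : Measure Ω}
    [IsProbabilityMeasure μ]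
    {G : MeasurableSpace Ω} (hG : G ≤ F)
    {R : Ω → ℕ} (hR : Measurable[G] R)
    {V : Ω → ℝ} (hVint : Integrable V μ)
    {α : ℝ} (hα : α ∈ Set.Ioo (0 : ℝ) 1)
    (hcond : ∀ᵐ ω ∂μ, (μ[V | G]) ω ≤ α * (R ω : ℝ)) :
    ∫ ω, V ω / max (R ω : ℝ) 1 ∂μ ≤ α := by
  set c : Ω → ℝ := fun ω => (max (R ω : ℝ) 1)⁻¹
  have hc : StronglyMeasurable[G] c :=
    (measurable_from_top (f := fun n : ℕ => (max (n : ℝ) 1)⁻¹) |>.comp hR).stronglyMeasurable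
  have hc_le : ∀ ω, ‖c ω‖ ≤ 1 := fun ω => by
    rw [Real.norm_of_nonneg (inv_nonneg.2 (zero_le_one.trans (le_max_right _ _)))]
    exact inv_le_one_of_one_le₀ (le_max_right _ _)
  calc ∫ ω, V ω / max (R ω : ℝ) 1 ∂μ = ∫ ω, c ω * V ω ∂μ := by
        simp only [c, div_eq_inv_mul]
    _ = ∫ ω, c ω * μ[V | G] ω ∂μ :=
        (integral_mul_condExp_of_stronglyMeasurable hG hc hc_le hVint).symm
    _ ≤ ∫ _, α ∂μ :=
        integral_mono_ae (integrable_condExp.bdd_mul (hc.mono hG).aestronglyMeasurable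
          (ae_of_all _ hc_le)) (integrable_const α)
          (hcond.mono fun ω h => inv_max_one_mul_le hα.1.le h)
    _ = α := by simp

/-- If `E[V | G] ≤ α · R` a.s., where `R` is a `G`-measurable `ℕ`-valued random
variable and `V` is a nonnegative integrable random variable, then
`E[ V / max{R, 1} ] ≤ α`. -/
theorem fdr_core_bound {Ω : Type*} {F : MeasurableSpace Ω} {μ : Measure Ω}
    [IsProbabilityMeasure μ]
    {G : MeasurableSpace Ω} (hG : G ≤ F)
    {R : Ω → ℕ} (hR : Measurable[G] R)
    {V : Ω → ℝ} (hV0 : ∀ ω, 0 ≤ V ω) (hVint : Integrable V μ)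
    {α : ℝ} (hα : α ∈ Set.Ioo (0 : ℝ) 1)
    (hcond : ∀ᵐ ω ∂μ, (μ[V | G]) ω ≤ α * (R ω : ℝ)) :
    ∫ ω, V ω / max (R ω : ℝ) 1 ∂μ ≤ α :=
  fdr_core_bound_general hG hR hVint hα hcond
end

section
/- Let (Ω, F, P) be a probability space, G a sub-σ-algebra of F, α ∈ (0,1), and K ≥ 1 an integer. For each k ∈ {1,…,K}, let D_k ∈ G be an event (the event that a change is declared for stream k) and F_k ∈ F an event with F_k ⊆ D_k (the event that the declaration for stream k is a false discovery), and suppose E[1_{F_k} | G] ≤ α·1_{D_k} almost surely. Then E[ (Σ_{k=1}^{K} 1_{F_k}) / max{Σ_{k=1}^{K} 1_{D_k}, 1} ] ≤ α; that is, FDR ≤ α. -/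
/-!
Summing the hypothesis over the streams gives `E[V | G] ≤ α R` for `V = Σ 1_{F_k}` and
`R = Σ 1_{D_k}`. The weight `1 / max(R, 1)` is `G`-measurable and lies in `[0, 1]`, so it can be
pulled through the conditional expectation:
`E[V / max(R, 1)] = E[E[V | G] / max(R, 1)] ≤ α E[R / max(R, 1)] ≤ α`.
-/

open MeasureTheory

section

variable {Ω : Type*} {m m₀ : MeasurableSpace Ω} {μ : Measure Ω}

theorem condExp_finsetSum_le {ι : Type*} {s : Finset ι} {f g : ι → Ω → ℝ}
    (hf : ∀ i ∈ s, Integrable (f i) μ) (hfg : ∀ i ∈ s, μ[f i | m] ≤ᵐ[μ] g i) :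
    μ[∑ i ∈ s, f i | m] ≤ᵐ[μ] ∑ i ∈ s, g i := by
  filter_upwards [condExp_finsetSum hf m, (Filter.eventually_all_finset s).2 hfg] with ω hsum hle
  rw [hsum, Finset.sum_apply, Finset.sum_apply]
  exact Finset.sum_le_sum hle

theorem integral_mul_le_integral_mul_of_condExp_le [IsFiniteMeasure μ] (hm : m ≤ m₀)
    {w f h : Ω → ℝ} {c : ℝ} (hw : StronglyMeasurable[m] w) (hw_nonneg : 0 ≤ᵐ[μ] w)
    (hw_le : w ≤ᵐ[μ] fun _ => c) (hf : Integrable f μ) (hh : Integrable h μ)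
    (hfh : μ[f | m] ≤ᵐ[μ] h) :
    ∫ ω, w ω * f ω ∂μ ≤ ∫ ω, w ω * h ω ∂μ := by
  have hw_bound : ∀ᵐ ω ∂μ, ‖w ω‖ ≤ c := by
    filter_upwards [hw_nonneg, hw_le] with ω h0 h1
    rwa [Real.norm_of_nonneg h0]
  have hw' : AEStronglyMeasurable w μ := (hw.mono hm).aestronglyMeasurable
  calc ∫ ω, w ω * f ω ∂μ = ∫ ω, (μ[w * f | m]) ω ∂μ := (integral_condExp hm).symm
    _ = ∫ ω, w ω * (μ[f | m]) ω ∂μ :=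
      integral_congr_ae (condExp_stronglyMeasurable_mul_of_bound hm hw hf c hw_bound)
    _ ≤ ∫ ω, w ω * h ω ∂μ := by
      refine integral_mono_ae (integrable_condExp.bdd_mul hw' hw_bound)
        (hh.bdd_mul hw' hw_bound) ?_
      filter_upwards [hw_nonneg, hfh] with ω hw0 hω
      exact mul_le_mul_of_nonneg_left hω hw0

theorem inv_max_one_mul_le_one (x : ℝ) : (max x 1)⁻¹ * x ≤ 1 := by
  rw [inv_mul_eq_div]
  exact div_le_one_of_le₀ (le_max_left x 1) (zero_le_one.trans (le_max_right x 1))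

theorem integral_inv_max_one_mul_le [IsProbabilityMeasure μ] {R : Ω → ℝ} (hR : 0 ≤ R)
    {c : ℝ} (hc : 0 ≤ c) : ∫ ω, (max (R ω) 1)⁻¹ * (c * R ω) ∂μ ≤ c := by
  calc ∫ ω, (max (R ω) 1)⁻¹ * (c * R ω) ∂μ ≤ ∫ _, c ∂μ := by
        refine integral_mono_of_nonneg (ae_of_all _ fun ω =>
          mul_nonneg (inv_nonneg.2 (zero_le_one.trans (le_max_right _ _))) (mul_nonneg hc (hR ω)))
          (integrable_const c) (ae_of_all _ fun ω => ?_)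
        dsimp only
        rw [mul_left_comm]
        exact mul_le_of_le_one_right hc (inv_max_one_mul_le_one (R ω))
    _ = c := by simp

end

theorem fdr_control_IS_MAP_general {Ω : Type*} {F : MeasurableSpace Ω} {μ : Measure Ω}
    [IsProbabilityMeasure μ]
    {G : MeasurableSpace Ω} (hG : G ≤ F)
    {K : ℕ}
    {D : Fin K → Set Ω} {Fk : Fin K → Set Ω}
    (hD : ∀ k, MeasurableSet[G] (D k))
    (hF : ∀ k, MeasurableSet[F] (Fk k))
    {α : ℝ} (hα : α ∈ Set.Ioo (0 : ℝ) 1)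
    (hcond : ∀ k, ∀ᵐ ω ∂μ,
      (μ[(Fk k).indicator (fun _ => (1 : ℝ)) | G]) ω
        ≤ α * (D k).indicator (fun _ => (1 : ℝ)) ω) :
    ∫ ω, (∑ k, (Fk k).indicator (fun _ => (1 : ℝ)) ω)
        / max (∑ k, (D k).indicator (fun _ => (1 : ℝ)) ω) 1 ∂μ ≤ α := by
  set V : Ω → ℝ := fun ω => ∑ k, (Fk k).indicator (fun _ => 1) ω with hV
  set R : Ω → ℝ := fun ω => ∑ k, (D k).indicator (fun _ => 1) ω
  have hF_int k : Integrable ((Fk k).indicator fun _ => (1 : ℝ)) μ :=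
    (integrable_const (1 : ℝ)).indicator (hF k)
  have hR_int : Integrable R μ :=
    integrable_finsetSum _ fun k _ => (integrable_const (1 : ℝ)).indicator (hG _ (hD k))
  have hR_meas : Measurable[G] R :=
    Finset.measurable_sum _ fun k _ => measurable_const.indicator (hD k)
  have hR_nonneg : 0 ≤ R := fun ω =>
    Finset.sum_nonneg fun k _ => Set.indicator_nonneg (fun _ _ => zero_le_one) ω
  have hV_condExp : μ[V | G] ≤ᵐ[μ] fun ω => α * R ω := by
    rw [hV, ← Finset.sum_fn]
    filter_upwards [condExp_finsetSum_le (fun k _ => hF_int k) fun k _ => hcond k] with ω h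
    simpa [R, Finset.mul_sum] using h
  have hw_mem ω : (max (R ω) 1)⁻¹ ∈ Set.Icc (0 : ℝ) 1 :=
    ⟨by positivity, inv_le_one_of_one_le₀ (le_max_right _ _)⟩
  calc ∫ ω, V ω / max (R ω) 1 ∂μ = ∫ ω, (max (R ω) 1)⁻¹ * V ω ∂μ := by
        simp only [div_eq_mul_inv, mul_comm]
    _ ≤ ∫ ω, (max (R ω) 1)⁻¹ * (α * R ω) ∂μ :=
        integral_mul_le_integral_mul_of_condExp_le hG
          (hR_meas.max measurable_const).inv.stronglyMeasurable
          (ae_of_all _ fun ω => (hw_mem ω).1)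
          (ae_of_all _ fun ω => (hw_mem ω).2)
          (integrable_finsetSum _ fun k _ => hF_int k) (hR_int.const_mul α) hV_condExp
    _ ≤ α := integral_inv_max_one_mul_le hR_nonneg hα.1.le

/-- abstract FDR control for the IS-MAP procedure. If for each stream `k` the
declaration event `D k` is `G`-measurable, the false-discovery event `Fk k ⊆ D k`, and
`E[1_{Fk k} | G] ≤ α · 1_{D k}` a.s., then
`E[ (Σ_k 1_{Fk k}) / max{Σ_k 1_{D k}, 1} ] ≤ α`. -/
theorem fdr_control_IS_MAP {Ω : Type*} {F : MeasurableSpace Ω} {μ : Measure Ω}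
    [IsProbabilityMeasure μ]
    {G : MeasurableSpace Ω} (hG : G ≤ F)
    {K : ℕ} (hK : 1 ≤ K)
    {D : Fin K → Set Ω} {Fk : Fin K → Set Ω}
    (hD : ∀ k, MeasurableSet[G] (D k))
    (hF : ∀ k, MeasurableSet[F] (Fk k))
    (hsub : ∀ k, Fk k ⊆ D k)
    {α : ℝ} (hα : α ∈ Set.Ioo (0 : ℝ) 1)
    (hcond : ∀ k, ∀ᵐ ω ∂μ,
      (μ[(Fk k).indicator (fun _ => (1 : ℝ)) | G]) ω
        ≤ α * (D k).indicator (fun _ => (1 : ℝ)) ω) :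
    ∫ ω, (∑ k, (Fk k).indicator (fun _ => (1 : ℝ)) ω)
        / max (∑ k, (D k).indicator (fun _ => (1 : ℝ)) ω) 1 ∂μ ≤ α :=
  fdr_control_IS_MAP_general hG hD hF hα hcond
end

section
/- Let (Ω, F, P) be a probability space with a filtration (F_n)_{n ∈ ℕ}, let t : Ω → ℕ be a measurable random time with t ≥ 1, and for each n ∈ ℕ let π_n be an F_n-measurable version of the conditional expectation E[1_{t ≤ n} | F_n]. Fix α ∈ (0,1), an integer K ≥ 1, and an integer r with 1 ≤ r ≤ K, and define the hitting time T_r := inf{ n ∈ ℕ : π_n ≥ 1 − rα/K } (with T_r = ∞ if no such n exists). Then P({T_r < ∞} ∩ {T_r < t}) ≤ rα/K. -/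
open MeasureTheory

/-!
If `τ` is a stopping time and the posterior `π_n = P(t ≤ n | F_n)` is at least `q` on `{τ = n}`,
then, since `{τ = n} ∈ F_n`, `P(τ = n, t ≤ n) = E[π_n; τ = n] ≥ q P(τ = n)`, that is
`P(τ = n < t) ≤ (1 - q) P(τ = n)`. Summing over the disjoint events `{τ = n}` gives
`P(τ < t) ≤ 1 - q`. The S-MAP time `T_r` is the hitting time of `[1 - rα/K, ∞)` by `π`, a
stopping time at which `π ≥ 1 - rα/K`.
-/

theorem measure_diff_le_of_le_condExp_indicator {Ω : Type*} {m m₀ : MeasurableSpace Ω}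
    {μ : Measure Ω} [IsFiniteMeasure μ] (hm : m ≤ m₀) {A B : Set Ω} (hA : MeasurableSet[m] A)
    (hB : MeasurableSet B) {q : ℝ}
    (hq : ∀ᵐ ω ∂μ, ω ∈ A → q ≤ μ[B.indicator (fun _ => (1 : ℝ)) | m] ω) :
    μ (A \ B) ≤ ENNReal.ofReal (1 - q) * μ A := by
  have hA₀ : MeasurableSet A := hm A hA
  have hint : ∫ ω in A, μ[B.indicator (fun _ => (1 : ℝ)) | m] ω ∂μ = μ.real (A ∩ B) := by
    rw [setIntegral_condExp hm ((integrable_const 1).indicator hB) hA, setIntegral_indicator hB]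
    simp [measureReal_restrict_apply]
  have hlow : q * μ.real A ≤ μ.real (A ∩ B) :=
    calc q * μ.real A = ∫ _ in A, q ∂μ := by simp [mul_comm]
      _ ≤ _ := integral_mono_ae (integrable_const q) integrable_condExp.integrableOn
          ((ae_restrict_iff' hA₀).2 hq)
      _ = _ := hint
  have hreal : μ.real (A \ B) ≤ (1 - q) * μ.real A := by
    linarith [measureReal_inter_add_sdiff (s := A) (μ := μ) hB]
  calc μ (A \ B) = ENNReal.ofReal (μ.real (A \ B)) := (ofReal_measureReal).symm
    _ ≤ ENNReal.ofReal ((1 - q) * μ.real A) := ENNReal.ofReal_le_ofReal hreal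
    _ = ENNReal.ofReal (1 - q) * μ A := by
      rw [ENNReal.ofReal_mul' measureReal_nonneg, ofReal_measureReal]

theorem MeasureTheory.IsStoppingTime.measure_lt_le_one_sub {Ω : Type*} {m₀ : MeasurableSpace Ω}
    {μ : Measure Ω} [IsProbabilityMeasure μ] {𝓕 : Filtration ℕ m₀} {t : Ω → ℕ} (ht : Measurable t)
    {π : ℕ → Ω → ℝ}
    (hπ : ∀ n, π n =ᵐ[μ] μ[Set.indicator {ω | t ω ≤ n} (fun _ => (1 : ℝ)) | 𝓕 n])
    {τ : Ω → ℕ∞} (hτ : IsStoppingTime 𝓕 τ) {q : ℝ} (hq : ∀ ω (n : ℕ), τ ω = n → q ≤ π n ω) :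
    μ {ω | τ ω < t ω} ≤ ENNReal.ofReal (1 - q) := by
  have hsub : {ω | τ ω < t ω} ⊆ ⋃ n : ℕ, {ω | τ ω = n} \ {ω | t ω ≤ n} := by
    intro ω (hω : τ ω < t ω)
    obtain ⟨n, hn⟩ := ENat.ne_top_iff_exists.1 (hω.trans (ENat.natCast_lt_top _)).ne
    rw [← hn, Nat.cast_lt] at hω
    exact Set.mem_iUnion.2 ⟨n, hn.symm, by simpa using hω⟩
  have hdisj : Pairwise (Function.onFun Disjoint fun n : ℕ => {ω | τ ω = n}) :=
    fun i j hij => Set.disjoint_left.2 fun ω (hi : τ ω = i) (hj : τ ω = j) =>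
      hij (by exact_mod_cast hi.symm.trans hj)
  have hmeas (n : ℕ) : MeasurableSet[𝓕 n] {ω | τ ω = n} := hτ.measurableSet_eq n
  calc μ {ω | τ ω < t ω} ≤ μ (⋃ n : ℕ, {ω | τ ω = n} \ {ω | t ω ≤ n}) := measure_mono hsub
    _ ≤ ∑' n : ℕ, μ ({ω | τ ω = n} \ {ω | t ω ≤ n}) := measure_iUnion_le _
    _ ≤ ∑' n : ℕ, ENNReal.ofReal (1 - q) * μ {ω | τ ω = n} :=
      ENNReal.tsum_le_tsum fun n => measure_diff_le_of_le_condExp_indicator (𝓕.le n) (hmeas n)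
        (ht measurableSet_Iic) ((hπ n).mono fun ω h hω => h ▸ hq ω n hω)
    _ = ENNReal.ofReal (1 - q) * μ (⋃ n : ℕ, {ω | τ ω = n}) := by
      rw [ENNReal.tsum_mul_left, measure_iUnion hdisj fun n => 𝓕.le n _ (hmeas n)]
    _ ≤ ENNReal.ofReal (1 - q) := mul_le_of_le_one_right' prob_le_one

theorem sInf_setOf_natCast_mem_eq_hittingAfter {Ω β : Type*} (u : ℕ → Ω → β) (s : Set β)
    (ω : Ω) : sInf {m : ℕ∞ | ∃ n : ℕ, m = n ∧ u n ω ∈ s} = hittingAfter u s 0 ω := by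
  refine le_antisymm ?_ (le_sInf ?_)
  · rcases eq_or_ne (hittingAfter u s 0 ω) ⊤ with htop | htop
    · exact htop ▸ le_top
    · have hmem := hittingAfter_mem_set_of_ne_top htop
      lift hittingAfter u s 0 ω to ℕ using htop with n
      exact sInf_le ⟨n, rfl, hmem⟩
  · rintro _ ⟨n, rfl, hn⟩
    exact hittingAfter_le_of_mem (Nat.zero_le n) hn

theorem typeI_error_S_MAP_threshold_general {Ω : Type*} {F : MeasurableSpace Ω}
    {μ : Measure Ω} [IsProbabilityMeasure μ]
    (𝓕 : Filtration ℕ F)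
    {t : Ω → ℕ} (ht : Measurable t)
    (π : ℕ → Ω → ℝ)
    (hπmeas : ∀ n, StronglyMeasurable[𝓕 n] (π n))
    (hπ : ∀ n, π n =ᵐ[μ] μ[Set.indicator {ω | t ω ≤ n} (fun _ => (1 : ℝ)) | 𝓕 n])
    {α : ℝ}
    {K : ℕ} {r : ℕ}
    (T : Ω → ℕ∞)
    (hTdef : ∀ ω, T ω =
      sInf {m : ℕ∞ | ∃ n : ℕ, m = (n : ℕ∞) ∧ 1 - (r : ℝ) * α / (K : ℝ) ≤ π n ω}) :
    μ {ω | T ω < ⊤ ∧ T ω < (t ω : ℕ∞)} ≤ ENNReal.ofReal ((r : ℝ) * α / (K : ℝ)) := by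
  set c : ℝ := (r : ℝ) * α / (K : ℝ)
  have hT : T = hittingAfter π (Set.Ici (1 - c)) 0 :=
    funext fun ω => (hTdef ω).trans (sInf_setOf_natCast_mem_eq_hittingAfter π _ ω)
  have hτ : IsStoppingTime 𝓕 T :=
    hT ▸ Adapted.isStoppingTime_hittingAfter (fun n => (hπmeas n).measurable) measurableSet_Ici
  have hstop (ω : Ω) (n : ℕ) (hn : T ω = n) : 1 - c ≤ π n ω := by
    rw [hT] at hn
    have htop : hittingAfter π (Set.Ici (1 - c)) 0 ω ≠ ⊤ := hn ▸ ENat.natCast_ne_top n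
    simpa [hn] using hittingAfter_mem_set_of_ne_top htop
  calc μ {ω | T ω < ⊤ ∧ T ω < (t ω : ℕ∞)} = μ {ω | T ω < t ω} := by
        congr; ext ω; simpa using fun h => h.trans (ENat.natCast_lt_top _)
    _ ≤ ENNReal.ofReal (1 - (1 - c)) := hτ.measure_lt_le_one_sub ht hπ hstop
    _ = ENNReal.ofReal c := by rw [sub_sub_cancel]

/-- Type I error guarantee of the S-MAP thresholds. For the hitting time
`T_r = inf{ n : π_n ≥ 1 - rα/K }` of the posterior probability `π_n = P(t ≤ n | F_n)`,
one has `P(T_r < ∞, T_r < t) ≤ rα/K`. -/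
theorem typeI_error_S_MAP_threshold {Ω : Type*} {F : MeasurableSpace Ω}
    {μ : Measure Ω} [IsProbabilityMeasure μ]
    (𝓕 : Filtration ℕ F)
    {t : Ω → ℕ} (ht : Measurable t) (ht1 : ∀ ω, 1 ≤ t ω)
    (π : ℕ → Ω → ℝ)
    (hπmeas : ∀ n, StronglyMeasurable[𝓕 n] (π n))
    (hπ : ∀ n, π n =ᵐ[μ] μ[Set.indicator {ω | t ω ≤ n} (fun _ => (1 : ℝ)) | 𝓕 n])
    {α : ℝ} (hα : α ∈ Set.Ioo (0 : ℝ) 1)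
    {K : ℕ} (hK : 1 ≤ K) {r : ℕ} (hr1 : 1 ≤ r) (hrK : r ≤ K)
    (T : Ω → ℕ∞)
    (hTdef : ∀ ω, T ω =
      sInf {m : ℕ∞ | ∃ n : ℕ, m = (n : ℕ∞) ∧ 1 - (r : ℝ) * α / (K : ℝ) ≤ π n ω}) :
    μ {ω | T ω < ⊤ ∧ T ω < (t ω : ℕ∞)} ≤ ENNReal.ofReal ((r : ℝ) * α / (K : ℝ)) :=
  typeI_error_S_MAP_threshold_general 𝓕 ht π hπmeas hπ T hTdef
end

section
/- Let V : ℕ → ℕ satisfy V(0) = 0 and 1 ≤ V(n) − V(n−1) ≤ B for every n ≥ 1, where B ≥ 1 is an integer. Let t, T, γ, Γ be integers with t ≥ 1, γ ≥ 1, Γ ≥ 1, such that V(γ−1) < t ≤ V(γ) and T ≤ V(Γ). Then, as real numbers, T − t ≤ (V(Γ)/Γ)·(Γ − γ) + γ·(B − 1) + (B − 1). -/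
/-!
Observation times advance by at least one slot per observation, so `γ ≤ V (γ - 1) + 1 ≤ t`, and by
at most `B`, so the average interval `V Γ / Γ` is at most `B`. Hence
`(V Γ / Γ) * (Γ - γ) ≥ V Γ - B γ`, and the claim reduces to `T - t ≤ V Γ - γ + (B - 1)`.
-/

theorem le_add_mul_of_le_add (V : ℕ → ℕ) {B : ℕ} (hstep : ∀ n, V (n + 1) ≤ V n + B) (n : ℕ) :
    V n ≤ V 0 + n * B := by
  induction n with
  | zero => simp
  | succ k ih => rw [add_one_mul]; linarith [hstep k]

theorem sub_mul_le_div_mul_sub {v Γ γ B : ℝ} (hv : 0 ≤ v) (hΓ : 0 ≤ Γ) (hγ : 0 ≤ γ) (hB : 0 ≤ B)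
    (hvΓ : v ≤ B * Γ) : v - B * γ ≤ v / Γ * (Γ - γ) := by
  have hcancel : v / Γ * Γ = v :=
    div_mul_cancel_of_imp fun h => le_antisymm (by simpa [h] using hvΓ) hv
  have havg : v / Γ ≤ B := div_le_of_le_mul₀ hΓ hB hvΓ
  calc v - B * γ ≤ v - v / Γ * γ := by gcongr
    _ = v / Γ * (Γ - γ) := by rw [mul_sub, hcancel]

theorem delay_decomposition_general (V : ℕ → ℕ) (hV0 : V 0 = 0)
    {B : ℕ} (hB : 1 ≤ B)
    (hstep : ∀ n : ℕ, 1 ≤ n → V (n - 1) + 1 ≤ V n ∧ V n ≤ V (n - 1) + B)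
    (T : ℤ) (t γ Γ : ℕ)
    (h1 : V (γ - 1) < t) (h3 : T ≤ (V Γ : ℤ)) :
    (T : ℝ) - (t : ℝ) ≤
      ((V Γ : ℝ) / (Γ : ℝ)) * ((Γ : ℝ) - (γ : ℝ)) + (γ : ℝ) * ((B : ℝ) - 1) + ((B : ℝ) - 1) := by
  have hsucc (n : ℕ) : V n < V (n + 1) ∧ V (n + 1) ≤ V n + B := by
    simpa using hstep (n + 1) n.succ_pos
  have hγt : γ ≤ t := by
    have : γ - 1 ≤ V (γ - 1) := (strictMono_nat_of_lt_succ fun n => (hsucc n).1).id_le _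
    omega
  have hVΓ : V Γ ≤ B * Γ := by
    simpa [hV0, mul_comm] using le_add_mul_of_le_add V (fun n => (hsucc n).2) Γ
  have hdecomp := sub_mul_le_div_mul_sub (v := V Γ) (Γ := Γ) (γ := γ) (B := B)
    (by positivity) (by positivity) (by positivity) (by positivity) (by exact_mod_cast hVΓ)
  have hT : (T : ℝ) ≤ V Γ := by exact_mod_cast h3
  have hγt' : (γ : ℝ) ≤ t := by exact_mod_cast hγt
  have hB' : (1 : ℝ) ≤ B := by exact_mod_cast hB
  linarith

/-- deterministic delay-decomposition inequality. If the observation times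
`V(n)` have inter-observation intervals between `1` and `B`, `V(γ−1) < t ≤ V(γ)`, and
`T ≤ V(Γ)`, then `T − t ≤ (V(Γ)/Γ)(Γ − γ) + γ(B − 1) + (B − 1)`. -/
theorem delay_decomposition (V : ℕ → ℕ) (hV0 : V 0 = 0)
    {B : ℕ} (hB : 1 ≤ B)
    (hstep : ∀ n : ℕ, 1 ≤ n → V (n - 1) + 1 ≤ V n ∧ V n ≤ V (n - 1) + B)
    (T : ℤ) (t γ Γ : ℕ) (ht : 1 ≤ t) (hγ : 1 ≤ γ) (hΓ : 1 ≤ Γ)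
    (h1 : V (γ - 1) < t) (h2 : t ≤ V γ) (h3 : T ≤ (V Γ : ℤ)) :
    (T : ℝ) - (t : ℝ) ≤
      ((V Γ : ℝ) / (Γ : ℝ)) * ((Γ : ℝ) - (γ : ℝ)) + (γ : ℝ) * ((B : ℝ) - 1) + ((B : ℝ) - 1) :=
  delay_decomposition_general V hV0 hB hstep T t γ Γ h1 h3
end
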